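/- For every nonzero matrix M ∈ ℝ^{K×d}, Φ_L(M) converges to rank(M) as the integer L tends to infinity. -/

import Mathlib

/-!
Put `q = 2/(L-1)`, so that `‖D_λ⁻¹M‖_{S^q}^{2/L} = (Σ_j σ_j^q)^{(L-1)/L}`. Since `D_λ` is
invertible, exactly `rank M` of the `σ_j = σ_j(D_λ⁻¹M)` are nonzero, and `σ^q → 1` for `σ > 0`
as `q → 0`; a fixed `λ` (say the uniform one) therefore bounds `Φ_L(M)` from above by a quantity
tending to `rank M`. The matching lower bound needs the nonzero `σ_j` to stay away from `0`
uniformly in `λ`. As `λ_k ≤ 1`, `‖D_λ⁻¹Mv‖ ≥ ‖Mv‖`; and a unit eigenvector of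
`(D_λ⁻¹M)ᴴ(D_λ⁻¹M)` with nonzero eigenvalue is orthogonal to `ker M`, so by the spectral theorem
for `MᴴM` its eigenvalue is at least the smallest nonzero eigenvalue of `MᴴM`.
-/

open Matrix

/-- The singular values of a real `K × d` matrix `M`, given (in some order, with
multiplicity, padded with zeros up to `d` values) as the square roots of the
eigenvalues of `Mᴴ M`. -/
noncomputable def matSingVal {K d : ℕ} (M : Matrix (Fin K) (Fin d) ℝ) (j : Fin d) : ℝ :=
  Real.sqrt ((Matrix.isHermitian_conjTranspose_mul_self M).eigenvalues j)

/-- `‖M‖_{S^q}^q = Σ_k σ_k(M)^q`, the `q`-th power of the Schatten-`q` quasi-norm. -/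
noncomputable def schattenPow {K d : ℕ} (M : Matrix (Fin K) (Fin d) ℝ) (q : ℝ) : ℝ :=
  ∑ j, matSingVal M j ^ q

/-- The Schatten-`q` quasi-norm `‖M‖_{S^q} = (Σ_k σ_k(M)^q)^{1/q}`. -/
noncomputable def schattenNorm {K d : ℕ} (M : Matrix (Fin K) (Fin d) ℝ) (q : ℝ) : ℝ :=
  schattenPow M q ^ (1 / q)

/-- `Φ_L(M) = inf { ‖D_λ⁻¹ M‖_{S^{2/(L-1)}}^{2/L} : λ ∈ ℝ^K, λ > 0, ‖λ‖₂ = 1 }`. -/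
noncomputable def Phi (L : ℕ) {K d : ℕ} (M : Matrix (Fin K) (Fin d) ℝ) : ℝ :=
  sInf { r | ∃ l : Fin K → ℝ, (∀ k, 0 < l k) ∧ (∑ k, l k ^ 2) = 1 ∧
    r = schattenNorm (Matrix.diagonal (fun k => (l k)⁻¹) * M) (2 / ((L : ℝ) - 1)) ^ ((2 : ℝ) / L) }

namespace Matrix.IsHermitian
variable {n : Type*} [Fintype n] {A : Matrix n n ℝ}

theorem dotProduct_mulVec_comm (hA : A.IsHermitian) (u v : n → ℝ) :
    u ⬝ᵥ (A *ᵥ v) = (A *ᵥ u) ⬝ᵥ v := by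
  rw [dotProduct_mulVec, ← mulVec_transpose, ← conjTranspose_eq_transpose_of_trivial, hA.eq]

variable [DecidableEq n] (hA : A.IsHermitian)

theorem sum_dotProduct_eigenvectorBasis_mul (v w : n → ℝ) :
    ∑ i, (v ⬝ᵥ ⇑(hA.eigenvectorBasis i)) * (⇑(hA.eigenvectorBasis i) ⬝ᵥ w) = v ⬝ᵥ w := by
  simpa [EuclideanSpace.inner_eq_star_dotProduct, dotProduct_comm]
    using hA.eigenvectorBasis.sum_inner_mul_inner (WithLp.toLp 2 v) (WithLp.toLp 2 w)

theorem dotProduct_self_eq_sum (v : n → ℝ) :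
    v ⬝ᵥ v = ∑ i, (⇑(hA.eigenvectorBasis i) ⬝ᵥ v) ^ 2 := by
  rw [← hA.sum_dotProduct_eigenvectorBasis_mul]
  simp only [dotProduct_comm v, sq]

theorem dotProduct_mulVec_eq_sum (v : n → ℝ) :
    v ⬝ᵥ (A *ᵥ v) = ∑ i, hA.eigenvalues i * (⇑(hA.eigenvectorBasis i) ⬝ᵥ v) ^ 2 := by
  rw [← hA.sum_dotProduct_eigenvectorBasis_mul]
  refine Finset.sum_congr rfl fun i _ => ?_
  rw [hA.dotProduct_mulVec_comm, hA.mulVec_eigenvectorBasis, smul_dotProduct, smul_eq_mul,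
    dotProduct_comm v]
  ring

theorem dotProduct_eigenvectorBasis_self (i : n) :
    ⇑(hA.eigenvectorBasis i) ⬝ᵥ ⇑(hA.eigenvectorBasis i) = 1 := by
  have h := hA.eigenvectorBasis.inner_eq_one i
  rwa [EuclideanSpace.inner_eq_star_dotProduct, star_trivial] at h

theorem eigenvalues_eq_dotProduct (i : n) :
    hA.eigenvalues i = ⇑(hA.eigenvectorBasis i) ⬝ᵥ (A *ᵥ ⇑(hA.eigenvectorBasis i)) := by
  simpa using hA.eigenvalues_eq i

theorem dotProduct_eigenvectorBasis_eq_zero {u : n → ℝ} (hu : A *ᵥ u = 0) {j : n}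
    (hj : hA.eigenvalues j ≠ 0) : u ⬝ᵥ ⇑(hA.eigenvectorBasis j) = 0 := by
  have h : hA.eigenvalues j * (u ⬝ᵥ ⇑(hA.eigenvectorBasis j)) = 0 := by
    rw [← smul_eq_mul, ← dotProduct_smul, ← hA.mulVec_eigenvectorBasis, hA.dotProduct_mulVec_comm,
      hu, zero_dotProduct]
  exact (mul_eq_zero.1 h).resolve_left hj

theorem mul_dotProduct_self_le_dotProduct_mulVec {γ : ℝ}
    (hγ : ∀ i, hA.eigenvalues i ≠ 0 → γ ≤ hA.eigenvalues i) {v : n → ℝ}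
    (hv : ∀ u, A *ᵥ u = 0 → u ⬝ᵥ v = 0) : γ * (v ⬝ᵥ v) ≤ v ⬝ᵥ (A *ᵥ v) := by
  rw [hA.dotProduct_self_eq_sum, hA.dotProduct_mulVec_eq_sum, Finset.mul_sum]
  refine Finset.sum_le_sum fun i _ => ?_
  by_cases hi : hA.eigenvalues i = 0
  · have : A *ᵥ ⇑(hA.eigenvectorBasis i) = 0 := by
      rw [hA.mulVec_eigenvectorBasis, hi, zero_smul]
    simp [hv _ this]
  · exact mul_le_mul_of_nonneg_right (hγ i hi) (sq_nonneg _)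

end Matrix.IsHermitian

namespace Matrix
variable {m n : Type*} [Fintype m] [Fintype n]

theorem dotProduct_conjTranspose_mul_self_mulVec (A : Matrix m n ℝ) (v : n → ℝ) :
    v ⬝ᵥ ((Aᴴ * A) *ᵥ v) = (A *ᵥ v) ⬝ᵥ (A *ᵥ v) := by
  rw [← mulVec_mulVec, dotProduct_mulVec, conjTranspose_eq_transpose_of_trivial, vecMul_transpose]

variable [DecidableEq m]

theorem dotProduct_self_le_diagonal_mulVec {w : m → ℝ} (hw : ∀ k, 1 ≤ w k ^ 2) (x : m → ℝ) :
    x ⬝ᵥ x ≤ (diagonal w *ᵥ x) ⬝ᵥ (diagonal w *ᵥ x) := by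
  refine Finset.sum_le_sum fun k _ => ?_
  simp only [mulVec_diagonal]
  nlinarith [hw k, mul_self_nonneg (x k)]

theorem rank_diagonal_mul {w : m → ℝ} (hw : ∀ k, w k ≠ 0) (M : Matrix m n ℝ) :
    (diagonal w * M).rank = M.rank :=
  rank_mul_eq_right_of_isUnit_det _ _ (by simpa [det_diagonal, Finset.prod_ne_zero_iff] using hw)

variable [DecidableEq n]

theorem le_eigenvalues_conjTranspose_mul_self_diagonal_mul (M : Matrix m n ℝ) {w : m → ℝ}
    (hw : ∀ k, 1 ≤ w k ^ 2) {γ : ℝ}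
    (hγ : ∀ i, (isHermitian_conjTranspose_mul_self M).eigenvalues i ≠ 0 →
      γ ≤ (isHermitian_conjTranspose_mul_self M).eigenvalues i)
    {j : n} (hj : (isHermitian_conjTranspose_mul_self (diagonal w * M)).eigenvalues j ≠ 0) :
    γ ≤ (isHermitian_conjTranspose_mul_self (diagonal w * M)).eigenvalues j := by
  set hQ := isHermitian_conjTranspose_mul_self (diagonal w * M)
  set v := ⇑(hQ.eigenvectorBasis j)
  have hv : v ⬝ᵥ v = 1 := hQ.dotProduct_eigenvectorBasis_self j
  have hker : ∀ u, (Mᴴ * M) *ᵥ u = 0 → u ⬝ᵥ v = 0 := fun u hu =>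
    hQ.dotProduct_eigenvectorBasis_eq_zero (by
      rw [conjTranspose_mul_self_mulVec_eq_zero] at hu ⊢
      rw [← mulVec_mulVec, hu, mulVec_zero]) hj
  calc γ = γ * (v ⬝ᵥ v) := by rw [hv, mul_one]
    _ ≤ v ⬝ᵥ ((Mᴴ * M) *ᵥ v) :=
      (isHermitian_conjTranspose_mul_self M).mul_dotProduct_self_le_dotProduct_mulVec hγ hker
    _ ≤ v ⬝ᵥ (((diagonal w * M)ᴴ * (diagonal w * M)) *ᵥ v) := by
      rw [dotProduct_conjTranspose_mul_self_mulVec, dotProduct_conjTranspose_mul_self_mulVec,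
        ← mulVec_mulVec]
      exact dotProduct_self_le_diagonal_mulVec hw _
    _ = hQ.eigenvalues j := (hQ.eigenvalues_eq_dotProduct j).symm

end Matrix

open Filter Topology

theorem tendsto_rpow_nhdsGT_zero {x : ℝ} (hx : x ≠ 0) :
    Tendsto (fun q : ℝ => x ^ q) (𝓝[>] 0) (𝓝 1) := by
  simpa using ((continuous_const.rpow continuous_id fun _ => Or.inl hx).tendsto 0).mono_left
    nhdsWithin_le_nhds

theorem exists_pos_le_of_ne_zero {ι : Type*} [Finite ι] {f : ι → ℝ} (hf : ∀ i, 0 ≤ f i) :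
    ∃ γ > 0, ∀ i, f i ≠ 0 → γ ≤ f i := by
  refine (eventually_mem_nhdsWithin.and (eventually_all.2 fun i => ?_)).exists (f := 𝓝[>] (0 : ℝ))
  by_cases hi : f i = 0
  · exact .of_forall fun _ h => absurd hi h
  · filter_upwards [nhdsWithin_le_nhds (eventually_le_nhds ((hf i).lt_of_ne' hi))] with γ h _
      using h

section SingularValues
variable {K d : ℕ}

theorem matSingVal_ne_zero_iff {A : Matrix (Fin K) (Fin d) ℝ} {j : Fin d} :
    matSingVal A j ≠ 0 ↔ (isHermitian_conjTranspose_mul_self A).eigenvalues j ≠ 0 := by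
  rw [matSingVal, Real.sqrt_ne_zero']
  exact ((posSemidef_conjTranspose_mul_self A).eigenvalues_nonneg j).lt_iff_ne'

theorem card_matSingVal_ne_zero (A : Matrix (Fin K) (Fin d) ℝ) :
    (Finset.univ.filter fun j => matSingVal A j ≠ 0).card = A.rank := by
  rw [← rank_conjTranspose_mul_self,
    (isHermitian_conjTranspose_mul_self A).rank_eq_card_non_zero_eigs, Fintype.card_subtype]
  simp_rw [matSingVal_ne_zero_iff]

theorem exists_pos_le_matSingVal_diagonal_mul (M : Matrix (Fin K) (Fin d) ℝ) :
    ∃ s > 0, ∀ w : Fin K → ℝ, (∀ k, 1 ≤ w k ^ 2) → ∀ j, matSingVal (diagonal w * M) j ≠ 0 →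
      s ≤ matSingVal (diagonal w * M) j := by
  obtain ⟨γ, hγ, hγle⟩ :=
    exists_pos_le_of_ne_zero (posSemidef_conjTranspose_mul_self M).eigenvalues_nonneg
  exact ⟨√γ, Real.sqrt_pos.2 hγ, fun w hw j hj => Real.sqrt_le_sqrt
    (le_eigenvalues_conjTranspose_mul_self_diagonal_mul M hw hγle (matSingVal_ne_zero_iff.1 hj))⟩

theorem rank_mul_rpow_le_schattenPow {A : Matrix (Fin K) (Fin d) ℝ} {s q : ℝ} (hs : 0 ≤ s)
    (hq : 0 ≤ q) (h : ∀ j, matSingVal A j ≠ 0 → s ≤ matSingVal A j) :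
    A.rank * s ^ q ≤ schattenPow A q := by
  rw [← card_matSingVal_ne_zero, ← nsmul_eq_mul, schattenPow]
  refine (Finset.card_nsmul_le_sum _ _ _ fun j hj =>
    Real.rpow_le_rpow hs (h j (Finset.mem_filter.1 hj).2) hq).trans ?_
  exact Finset.sum_le_sum_of_subset_of_nonneg (Finset.filter_subset _ _)
    fun j _ _ => Real.rpow_nonneg (Real.sqrt_nonneg _) q

theorem tendsto_schattenPow (A : Matrix (Fin K) (Fin d) ℝ) :
    Tendsto (schattenPow A) (𝓝[>] 0) (𝓝 A.rank) := by
  have hterm : ∀ j, Tendsto (fun q : ℝ => matSingVal A j ^ q) (𝓝[>] 0)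
      (𝓝 (if matSingVal A j ≠ 0 then 1 else 0)) := by
    intro j
    split_ifs with hj
    · exact tendsto_rpow_nhdsGT_zero hj
    · rw [not_not.1 hj]
      exact tendsto_const_nhds.congr' (eventually_nhdsWithin_of_forall fun q hq =>
        (Real.zero_rpow (ne_of_gt hq)).symm)
  have := tendsto_finsetSum Finset.univ fun j _ => hterm j
  rwa [Finset.sum_boole, card_matSingVal_ne_zero] at this

theorem schattenPow_nonneg (A : Matrix (Fin K) (Fin d) ℝ) (q : ℝ) : 0 ≤ schattenPow A q :=
  Finset.sum_nonneg fun _ _ => Real.rpow_nonneg (Real.sqrt_nonneg _) q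

theorem schattenNorm_rpow (A : Matrix (Fin K) (Fin d) ℝ) (q t : ℝ) :
    schattenNorm A q ^ t = schattenPow A q ^ (t / q) := by
  rw [schattenNorm, ← Real.rpow_mul (schattenPow_nonneg A q), one_div_mul_eq_div]

end SingularValues

theorem tendsto_rpow_Phi_exponents {f : ℝ → ℝ} {a : ℝ} (hf : Tendsto f (𝓝[>] 0) (𝓝 a)) :
    Tendsto (fun L : ℕ => f (2 / ((L : ℝ) - 1)) ^ ((2 : ℝ) / L / (2 / ((L : ℝ) - 1))))
      atTop (𝓝 a) := by
  have hpred : Tendsto (fun L : ℕ => (L : ℝ) - 1) atTop atTop :=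
    tendsto_atTop_add_const_right _ _ tendsto_natCast_atTop_atTop
  have hq : Tendsto (fun L : ℕ => 2 / ((L : ℝ) - 1)) atTop (𝓝[>] 0) :=
    tendsto_nhdsWithin_iff.2 ⟨tendsto_const_nhds.div_atTop hpred,
      (hpred.eventually_gt_atTop 0).mono fun L hL => div_pos two_pos hL⟩
  have ht : Tendsto (fun L : ℕ => (2 : ℝ) / L / (2 / ((L : ℝ) - 1))) atTop (𝓝 1) := by
    have h : Tendsto (fun L : ℕ => 1 - 1 / (L : ℝ)) atTop (𝓝 (1 - 0)) :=
      tendsto_const_nhds.sub tendsto_one_div_atTop_nhds_zero_nat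
    rw [sub_zero] at h
    refine h.congr' ((eventually_gt_atTop 1).mono fun L hL => ?_)
    have : (1 : ℝ) < L := by exact_mod_cast hL
    field_simp
  simpa using (hf.comp hq).rpow ht (Or.inr one_pos)

theorem exists_pos_sum_sq_eq_one (ι : Type*) [Fintype ι] [Nonempty ι] :
    ∃ l : ι → ℝ, (∀ k, 0 < l k) ∧ ∑ k, l k ^ 2 = 1 := by
  have hcard : (0 : ℝ) < Fintype.card ι := by exact_mod_cast Fintype.card_pos
  refine ⟨fun _ => √(Fintype.card ι : ℝ)⁻¹, fun _ => by positivity, ?_⟩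
  simp [Real.sq_sqrt, hcard.ne']

theorem one_le_inv_sq_of_sum_sq_eq_one {ι : Type*} [Fintype ι] {l : ι → ℝ} (hl : ∀ k, l k ≠ 0)
    (hl1 : ∑ k, l k ^ 2 = 1) (k : ι) : 1 ≤ (l k)⁻¹ ^ 2 := by
  rw [inv_pow, one_le_inv₀ (sq_pos_of_ne_zero (hl k)), ← hl1]
  exact Finset.single_le_sum (fun i _ => sq_nonneg (l i)) (Finset.mem_univ k)

section Phi
variable {K d : ℕ}

theorem Phi_le (L : ℕ) (M : Matrix (Fin K) (Fin d) ℝ) {l : Fin K → ℝ} (hl : ∀ k, 0 < l k)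
    (hl1 : ∑ k, l k ^ 2 = 1) :
    Phi L M ≤
      schattenNorm (diagonal (fun k => (l k)⁻¹) * M) (2 / ((L : ℝ) - 1)) ^ ((2 : ℝ) / L) :=
  csInf_le ⟨0, by rintro _ ⟨l, -, -, rfl⟩; exact Real.rpow_nonneg (Real.rpow_nonneg
    (schattenPow_nonneg _ _) _) _⟩ ⟨l, hl, hl1, rfl⟩

theorem le_Phi (L : ℕ) (M : Matrix (Fin K) (Fin d) ℝ) {c : ℝ} (hK : 0 < K)
    (h : ∀ l : Fin K → ℝ, (∀ k, 0 < l k) → ∑ k, l k ^ 2 = 1 →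
      c ≤ schattenNorm (diagonal (fun k => (l k)⁻¹) * M) (2 / ((L : ℝ) - 1)) ^ ((2 : ℝ) / L)) :
    c ≤ Phi L M := by
  have : Nonempty (Fin K) := ⟨⟨0, hK⟩⟩
  obtain ⟨l₀, hl₀, hl₀1⟩ := exists_pos_sum_sq_eq_one (Fin K)
  refine le_csInf ⟨_, l₀, hl₀, hl₀1, rfl⟩ ?_
  rintro _ ⟨l, hl, hl1, rfl⟩
  exact h l hl hl1

end Phi

theorem Phi_tendsto_rank_general {K d : ℕ} (M : Matrix (Fin K) (Fin d) ℝ) :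
    Filter.Tendsto (fun L : ℕ => Phi L M) Filter.atTop (nhds (M.rank : ℝ)) := by
  rcases K.eq_zero_or_pos with rfl | hK
  · -- no admissible `λ` exists, so `Phi L M = sInf ∅ = 0`
    have hM : M.rank = 0 := Nat.le_zero.1 (M.rank_le_card_height.trans_eq (Fintype.card_fin 0))
    simp [Phi, hM]
  have : Nonempty (Fin K) := ⟨⟨0, hK⟩⟩
  obtain ⟨l₀, hl₀, hl₀1⟩ := exists_pos_sum_sq_eq_one (Fin K)
  obtain ⟨s, hs, hσ⟩ := exists_pos_le_matSingVal_diagonal_mul M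
  have hupper := tendsto_rpow_Phi_exponents
    (tendsto_schattenPow (diagonal (fun k => (l₀ k)⁻¹) * M))
  rw [rank_diagonal_mul fun k => inv_ne_zero (hl₀ k).ne'] at hupper
  have hlower := tendsto_rpow_Phi_exponents (f := fun q => (M.rank : ℝ) * s ^ q)
    (by simpa using (tendsto_rpow_nhdsGT_zero hs.ne').const_mul (M.rank : ℝ))
  refine tendsto_of_tendsto_of_tendsto_of_le_of_le' hlower hupper ?_
    (.of_forall fun L => (Phi_le L M hl₀ hl₀1).trans_eq (schattenNorm_rpow _ _ _))
  filter_upwards [eventually_ge_atTop 1] with L hL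
  have hq : (0 : ℝ) ≤ 2 / (L - 1) := div_nonneg zero_le_two (sub_nonneg.2 (by exact_mod_cast hL))
  refine le_Phi L M hK fun l hl hl1 => ?_
  rw [schattenNorm_rpow, ← rank_diagonal_mul fun k => inv_ne_zero (hl k).ne']
  exact Real.rpow_le_rpow (by positivity) (rank_mul_rpow_le_schattenPow hs.le hq
    (hσ _ (one_le_inv_sq_of_sum_sq_eq_one (fun k => (hl k).ne') hl1))) (by positivity)

/-- for a nonzero matrix `M`, `Φ_L(M) → rank(M)` as `L → ∞`. -/
theorem Phi_tendsto_rank {K d : ℕ} (M : Matrix (Fin K) (Fin d) ℝ) (hM : M ≠ 0) :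
    Filter.Tendsto (fun L : ℕ => Phi L M) Filter.atTop (nhds (M.rank : ℝ)) :=
  Phi_tendsto_rank_general M
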